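/- Let (S, step, s₀) be a transition system and F ⊆ S. Suppose ρ : Fin (m+1) → S is a finite run from s₀, and suppose there are indices a < b ≤ m with ρ a = ρ b and an index l with a < l ≤ b and ρ l ∈ F. Then there exists an infinite run π from s₀ such that the set {n : ℕ | π n ∈ F} is infinite. -/

import Mathlib

/-!
Unwind the lasso: follow `ρ` up to `b`, then jump back to `a + 1` (legitimate since `ρ a = ρ b`)
and go around the loop `a + 1, …, b` forever. Every index of the loop, in particular `l`, is
revisited with period `b - a`, so the visits to `F` form an infinite set.
-/

/-- A finite run of length `m` of a transition system from the initial state `s₀`. -/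
def TSFinRun {S : Type*} (step : S → S → Prop) (s₀ : S) (m : ℕ)
    (ρ : Fin (m + 1) → S) : Prop :=
  ρ 0 = s₀ ∧ ∀ i : Fin m, step (ρ i.castSucc) (ρ i.succ)

/-- An infinite run of a transition system from the initial state `s₀`. -/
def TSInfRun {S : Type*} (step : S → S → Prop) (s₀ : S) (π : ℕ → S) : Prop :=
  π 0 = s₀ ∧ ∀ n : ℕ, step (π n) (π (n + 1))

theorem Nat.add_one_mod_eq_ite {x p : ℕ} (hp : 0 < p) :
    (x + 1) % p = if x % p + 1 < p then x % p + 1 else 0 := by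
  have hx : x + 1 = x % p + 1 + p * (x / p) := by have := Nat.mod_add_div x p; omega
  rw [hx, Nat.add_mul_mod_self_left]
  split_ifs with h
  · exact Nat.mod_eq_of_lt h
  · rw [show x % p + 1 = p by have := Nat.mod_lt x hp; omega, Nat.mod_self]

theorem TSFinRun.step_ofNat {S : Type*} {step : S → S → Prop} {s₀ : S} {m : ℕ}
    {ρ : Fin (m + 1) → S} (hρ : TSFinRun step s₀ m ρ) {i : ℕ} (hi : i < m) :
    step (ρ (Fin.ofNat (m + 1) i)) (ρ (Fin.ofNat (m + 1) (i + 1))) := by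
  have hcast : Fin.ofNat (m + 1) i = (⟨i, hi⟩ : Fin m).castSucc :=
    Fin.ext (Nat.mod_eq_of_lt (by omega))
  have hsucc : Fin.ofNat (m + 1) (i + 1) = (⟨i, hi⟩ : Fin m).succ :=
    Fin.ext (Nat.mod_eq_of_lt (by omega))
  simpa only [hcast, hsucc] using hρ.2 ⟨i, hi⟩

/-- The position at time `n` on the lasso that runs through `0, …, b` and then cycles through
`a + 1, …, b`. -/
def lassoIndex (a b n : ℕ) : ℕ :=
  if n ≤ a then n else a + 1 + (n - (a + 1)) % (b - a)

section lassoIndex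

variable {a b : ℕ}

theorem lassoIndex_of_le {n : ℕ} (hn : n ≤ a) : lassoIndex a b n = n :=
  if_pos hn

theorem lassoIndex_zero : lassoIndex a b 0 = 0 :=
  lassoIndex_of_le (Nat.zero_le a)

theorem lassoIndex_add_one_add (x : ℕ) : lassoIndex a b (a + 1 + x) = a + 1 + x % (b - a) := by
  rw [lassoIndex, if_neg (by omega), Nat.add_sub_cancel_left]

theorem lassoIndex_le (hab : a < b) (n : ℕ) : lassoIndex a b n ≤ b := by
  unfold lassoIndex
  split_ifs
  · omega
  · have := Nat.mod_lt (n - (a + 1)) (show 0 < b - a by omega)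
    omega

theorem lassoIndex_add_one (hab : a < b) (n : ℕ) :
    lassoIndex a b (n + 1) =
      if lassoIndex a b n < b then lassoIndex a b n + 1 else a + 1 := by
  rcases lt_trichotomy n a with hna | rfl | hna
  · rw [lassoIndex_of_le hna.le, lassoIndex_of_le hna, if_pos (hna.trans hab)]
  · simpa [lassoIndex_of_le, hab] using lassoIndex_add_one_add (a := n) (b := b) 0
  · obtain ⟨x, rfl⟩ := Nat.exists_eq_add_of_lt hna
    rw [show a + x + 1 + 1 = a + 1 + (x + 1) by ring, show a + x + 1 = a + 1 + x by ring,
      lassoIndex_add_one_add, lassoIndex_add_one_add, Nat.add_one_mod_eq_ite (by omega)]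
    split_ifs <;> omega

theorem lassoIndex_add_mul {l : ℕ} (hal : a < l) (hlb : l ≤ b) (k : ℕ) :
    lassoIndex a b (l + k * (b - a)) = l := by
  obtain ⟨x, rfl⟩ : ∃ x, l = a + 1 + x := ⟨l - (a + 1), by omega⟩
  rw [add_assoc, lassoIndex_add_one_add, Nat.add_mul_mod_self_right, Nat.mod_eq_of_lt (by omega)]

theorem infinite_setOf_lassoIndex_eq {l : ℕ} (hal : a < l) (hlb : l ≤ b) :
    {n | lassoIndex a b n = l}.Infinite := by
  refine Set.infinite_of_injective_forall_mem (f := fun k => l + k * (b - a)) ?_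
    (lassoIndex_add_mul hal hlb)
  intro k k' hkk'
  exact Nat.eq_of_mul_eq_mul_right (show 0 < b - a by omega) (Nat.add_left_cancel hkk')

theorem step_lassoIndex {S : Type*} {step : S → S → Prop} {u : ℕ → S}
    (hu : ∀ i < b, step (u i) (u (i + 1))) (hab : a < b) (hrep : u a = u b) (n : ℕ) :
    step (u (lassoIndex a b n)) (u (lassoIndex a b (n + 1))) := by
  rw [lassoIndex_add_one hab]
  split_ifs with hn
  · exact hu _ hn
  · rw [(lassoIndex_le hab n).antisymm (not_lt.mp hn), ← hrep]
    exact hu a hab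

end lassoIndex

/-- Lasso construction: a finite run from `s₀` that repeats a state, with a visit to
`F` strictly between the repetitions, can be pumped into an infinite run from `s₀`
visiting `F` infinitely often. -/
theorem exists_infRun_infinite_visits_of_lasso {S : Type*}
    (step : S → S → Prop) (s₀ : S) (F : Set S) {m : ℕ} (ρ : Fin (m + 1) → S)
    (hρ : TSFinRun step s₀ m ρ) (a b : Fin (m + 1)) (hab : a < b) (hrep : ρ a = ρ b)
    (l : Fin (m + 1)) (hal : a < l) (hlb : l ≤ b) (hF : ρ l ∈ F) :
    ∃ π : ℕ → S, TSInfRun step s₀ π ∧ {n : ℕ | π n ∈ F}.Infinite := by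
  set u : ℕ → S := fun i => ρ (Fin.ofNat (m + 1) i)
  have hu : ∀ i < (b : ℕ), step (u i) (u (i + 1)) := fun i hi =>
    hρ.step_ofNat (hi.trans_le (Fin.is_le b))
  have hrep' : u a = u b := by simpa [u] using hrep
  refine ⟨fun n => u (lassoIndex a b n), ⟨?_, step_lassoIndex hu hab hrep'⟩, ?_⟩
  · simpa [u, lassoIndex_zero] using hρ.1
  · refine (infinite_setOf_lassoIndex_eq hal hlb).mono fun n (hn : lassoIndex a b n = l) => ?_
    simpa [u, hn] using hF
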